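/- Let (X,r) be a finite nondegenerate involutive square-free solution with mpl(X,r) = 3, and let X_1,...,X_s be the vertex sets of the connected components of its graph (the G(X,r)-orbits). Then for each i, the restricted solution (X_i, r|_{X_i×X_i}) has mpl(X_i) ≤ 2, and for each pair i ≠ j the stu conditions hold between X_i and X_j: λ_{ρ_y(α)}(x) = λ_α(x) for all x,y ∈ X_i, α ∈ X_j. -/

import Mathlib

/-- The quadratic map `r(x,y) = (λ_x(y), ρ_y(x))`. -/
def ybMap {X : Type*} (lam rho : X → X → X) : X × X → X × X :=
  fun p => (lam p.1 p.2, rho p.2 p.1)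

/-- `r¹² = r × id` on `X × X × X`. -/
def ybR12 {X : Type*} (lam rho : X → X → X) : X × X × X → X × X × X :=
  fun p => (lam p.1 p.2.1, rho p.2.1 p.1, p.2.2)

/-- `r²³ = id × r` on `X × X × X`. -/
def ybR23 {X : Type*} (lam rho : X → X → X) : X × X × X → X × X × X :=
  fun p => (p.1, lam p.2.1 p.2.2, rho p.2.2 p.2.1)

/-- The braid (Yang–Baxter) relation `r¹²r²³r¹² = r²³r¹²r²³`. -/
def YbBraided {X : Type*} (lam rho : X → X → X) : Prop :=
  ybR12 lam rho ∘ ybR23 lam rho ∘ ybR12 lam rho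
    = ybR23 lam rho ∘ ybR12 lam rho ∘ ybR23 lam rho

/-- `r` is involutive: `r ∘ r = id`. -/
def YbInvolutive {X : Type*} (lam rho : X → X → X) : Prop :=
  ∀ p, ybMap lam rho (ybMap lam rho p) = p

/-- Nondegeneracy: all `λ_x` and `ρ_x` are bijective. -/
def YbNondeg {X : Type*} (lam rho : X → X → X) : Prop :=
  (∀ x, Function.Bijective (lam x)) ∧ (∀ x, Function.Bijective (rho x))

/-- Condition lri: `ρ_x(λ_x(y)) = y = λ_x(ρ_x(y))`. -/
def YbLri {X : Type*} (lam rho : X → X → X) : Prop :=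
  ∀ x y, rho x (lam x y) = y ∧ lam x (rho x y) = y

/-- Square-free: `r(x,x) = (x,x)`. -/
def YbSquareFree {X : Type*} (lam rho : X → X → X) : Prop :=
  ∀ x, lam x x = x ∧ rho x x = x

/-- Iterated retraction equivalence relative to a subset `S`. -/
def ybRetRelOn {X : Type*} (lam : X → X → X) (S : Set X) : ℕ → X → X → Prop
  | 0 => fun x y => x = y
  | n + 1 => fun x y => ∀ z ∈ S, ybRetRelOn lam S n (lam x z) (lam y z)

/-- Connectedness in the graph `Γ(X,r)`. -/
def ybConn {X : Type*} (lam : X → X → X) : X → X → Prop :=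
  Relation.EqvGen (fun u v => ∃ a, lam a u = v)

/-!
By mpl ≤ 3 and square-freeness, `a ≡₃ z` evaluated at `z` gives `λ_a z ≡₂ λ_z z = z`, so every
edge of the graph `Γ(X,r)` joins elements that are equivalent at level 2; hence every connected
component lies in a single level-2 retraction class, which is `mpl(X_i) ≤ 2`. For stu, if `x, y`
lie in one component then `λ_{λ_y β} x = λ_{λ_x β} x = λ_β x` by the cyclic condition; take
`β = ρ_y α` and use lri.
-/

section Retraction

variable {X : Type*} {lam : X → X → X}

theorem ybRetRelOn_equivalence (S : Set X) : ∀ n, Equivalence (ybRetRelOn lam S n)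
  | 0 => eq_equivalence
  | n + 1 =>
    have h := ybRetRelOn_equivalence S n
    { refl := fun _ _ _ => h.refl _
      symm := fun hxy z hz => h.symm (hxy z hz)
      trans := fun hxy hyz z hz => h.trans (hxy z hz) (hyz z hz) }

theorem ybRetRelOn.mono {S T : Set X} (hST : S ⊆ T) :
    ∀ {n} {x y : X}, ybRetRelOn lam T n x y → ybRetRelOn lam S n x y
  | 0, _, _, h => h
  | _ + 1, _, _, h => fun z hz => ybRetRelOn.mono hST (h z (hST hz))

theorem ybRetRelOn_two_iff {S : Set X} {x y : X} :
    ybRetRelOn lam S 2 x y ↔ ∀ w ∈ S, ∀ v ∈ S, lam (lam x w) v = lam (lam y w) v :=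
  Iff.rfl

theorem ybRetRelOn.lam_self {S : Set X} {n : ℕ} {a z : X} (hsq : lam z z = z) (hz : z ∈ S)
    (h : ybRetRelOn lam S (n + 1) a z) : ybRetRelOn lam S n (lam a z) z := by
  simpa only [hsq] using h z hz

theorem ybRetRelOn_of_ybConn {n : ℕ} (hedge : ∀ a u : X, ybRetRelOn lam Set.univ n (lam a u) u)
    {u v : X} (huv : ybConn lam u v) : ybRetRelOn lam Set.univ n u v := by
  have hequiv := ybRetRelOn_equivalence (lam := lam) Set.univ n
  refine hequiv.eqvGen_iff.1 (Relation.EqvGen.mono ?_ _ _ huv)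
  rintro u _ ⟨a, rfl⟩
  exact hequiv.symm (hedge a u)

end Retraction

section SquareFree

variable {X : Type*} {lam rho : X → X → X}

theorem YbBraided.lam_lam_rho (hbr : YbBraided lam rho) (x y z : X) :
    lam (lam x y) (lam (rho y x) z) = lam x (lam y z) :=
  (Prod.mk.inj (congrFun hbr (x, y, z))).1

theorem YbInvolutive.lam_lam_rho (hinv : YbInvolutive lam rho) (x y : X) :
    lam (lam x y) (rho y x) = x :=
  (Prod.mk.inj (hinv (x, y))).1

variable (hlam : ∀ x, Function.Injective (lam x)) (hsf : YbSquareFree lam rho)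
  (hbr : YbBraided lam rho)
include hlam hsf hbr

theorem ybLri_of_squareFree (hinv : YbInvolutive lam rho) : YbLri lam rho := by
  have lam_rho : ∀ x y : X, lam y (rho y x) = x := fun x y => by
    apply hlam x
    have h := hbr.lam_lam_rho x y (rho y x)
    rw [(hsf _).1, hinv.lam_lam_rho] at h
    rw [(hsf x).1]
    exact h.symm
  exact fun x y => ⟨hlam x (lam_rho _ _), lam_rho y x⟩

theorem lam_rho_left_eq (x y : X) : lam (rho y x) y = lam x y := by
  apply hlam (lam x y)
  have h := hbr.lam_lam_rho x y y
  rw [(hsf y).1] at h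
  rwa [(hsf (lam x y)).1]

theorem lam_lam_left_eq (hlri : YbLri lam rho) (x y : X) : lam (lam y x) y = lam x y := by
  simpa only [(hlri y x).1] using (lam_rho_left_eq hlam hsf hbr (lam y x) y).symm

theorem lam_rho_eq_of_ybRetRelOn_two (hlri : YbLri lam rho) {x y : X}
    (hyx : ybRetRelOn lam Set.univ 2 y x) (α : X) : lam (rho y α) x = lam α x := by
  have h := ybRetRelOn_two_iff.1 hyx (rho y α) trivial x trivial
  rw [(hlri y α).2, lam_lam_left_eq hlam hsf hbr hlri] at h
  exact h.symm

end SquareFree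

theorem mpl_three_components_general {X : Type*} (lam rho : X → X → X)
    (hnd : YbNondeg lam rho) (hinv : YbInvolutive lam rho)
    (hsf : YbSquareFree lam rho) (hbr : YbBraided lam rho)
    (hm : (∀ x y : X, ybRetRelOn lam Set.univ 3 x y) ∧
      ¬ (∀ x y : X, ybRetRelOn lam Set.univ 2 x y)) :
    (∀ p : X, ∀ y ∈ {w | ybConn lam p w}, ∀ z ∈ {w | ybConn lam p w},
      ybRetRelOn lam {w | ybConn lam p w} 2 y z) ∧
    (∀ p q : X, ¬ ybConn lam p q →
      ∀ x, ybConn lam p x → ∀ y, ybConn lam p y → ∀ α, ybConn lam q α →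
        lam (rho y α) x = lam α x) := by
  have hlam : ∀ x, Function.Injective (lam x) := fun x => (hnd.1 x).1
  have hlri := ybLri_of_squareFree hlam hsf hbr hinv
  have hconn : ∀ {u v : X}, ybConn lam u v → ybRetRelOn lam Set.univ 2 u v :=
    ybRetRelOn_of_ybConn fun a u => (hm.1 a u).lam_self (hsf u).1 trivial
  have hconn_of_mem : ∀ {p y z : X}, ybConn lam p y → ybConn lam p z → ybConn lam y z :=
    fun hy hz => .trans _ _ _ (.symm _ _ hy) hz
  refine ⟨fun p y hy z hz => (hconn (hconn_of_mem hy hz)).mono (Set.subset_univ _), ?_⟩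
  intro p q _ x hx y hy α _
  exact lam_rho_eq_of_ybRetRelOn_two hlam hsf hbr hlri (hconn (hconn_of_mem hy hx)) α

/-- for a finite nondegenerate involutive square-free solution with
`mpl(X,r) = 3`: each connected component `X_i`, as a restricted solution, has
`mpl(X_i) ≤ 2`, and the stu conditions hold between distinct components:
`λ_{ρ_y(α)}(x) = λ_α(x)` for `x, y ∈ X_i`, `α ∈ X_j`, `i ≠ j`. -/
theorem mpl_three_components {X : Type*} [Finite X] (lam rho : X → X → X)
    (hnd : YbNondeg lam rho) (hinv : YbInvolutive lam rho)
    (hsf : YbSquareFree lam rho) (hbr : YbBraided lam rho)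
    (hm : (∀ x y : X, ybRetRelOn lam Set.univ 3 x y) ∧
      ¬ (∀ x y : X, ybRetRelOn lam Set.univ 2 x y)) :
    (∀ p : X, ∀ y ∈ {w | ybConn lam p w}, ∀ z ∈ {w | ybConn lam p w},
      ybRetRelOn lam {w | ybConn lam p w} 2 y z) ∧
    (∀ p q : X, ¬ ybConn lam p q →
      ∀ x, ybConn lam p x → ∀ y, ybConn lam p y → ∀ α, ybConn lam q α →
        lam (rho y α) x = lam α x) :=
  mpl_three_components_general lam rho hnd hinv hsf hbr hm
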